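/- arXiv:1006.4403 — 3 statements merged into one kernel-verified Lean document; each statement's English description precedes it below -/
import Mathlib

section
/- Let y_1,…,y_s : R^s → R be functions with each y_i nowhere zero, let α_1,…,α_s : R^s → R be functions, and set y_0 = α_1 y_1 + … + α_s y_s. Assume y_0 is nowhere zero, each α_i is nowhere zero, and let h_1,…,h_s be positive integers. Then 1/(y_0 · Π_{i=1}^s y_i^{h_i}) can be written as a finite linear combination of terms of the form f / Π_{i∈{0,…,s}∖{k}} y_i^{t_i}, where for each term k ∈ {1,…,s}, f is a product of powers α_1^{m_1}···α_s^{m_s} with m_i ∈ N, the t_i are nonnegative integers, and Σ_{i∈{0,…,s}∖{k}} t_i = 1 + Σ_{i=1}^s h_i. -/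
/-!
Multiplying `1 / (y₀^a ∏ yᵢ^{bᵢ})` by `y₀ / y₀ = ∑ⱼ αⱼ yⱼ / y₀` cancels one factor `yⱼ` in the
`j`-th summand: the exponent of `y₀` goes up by one, that of `yⱼ` down by one, and the total
degree `a + ∑ bᵢ` is unchanged. Repeating this while every `bᵢ` is positive, strong induction on
`∑ bᵢ` ends with terms in which some `y_k` no longer occurs, which are of the required shape
up to a monomial in the `αᵢ`. Linear combinations are handled as membership in the span of these
terms, which is closed under multiplication by each `αⱼ`.
-/

open Finset

section Field

variable {ι K : Type*} [Fintype ι] [DecidableEq ι] [Field K]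

lemma prod_pow_update (y : ι → K) (b : ι → ℕ) (j : ι) (n : ℕ) :
    ∏ i, y i ^ Function.update b j n i = y j ^ n * ∏ i ∈ univ.erase j, y i ^ b i := by
  rw [← mul_prod_erase univ _ (mem_univ j), Function.update_self]
  exact congrArg _ (prod_congr rfl fun i hi => by rw [Function.update_of_ne (ne_of_mem_erase hi)])

lemma prod_pow_update_succ (y : ι → K) (b : ι → ℕ) (j : ι) :
    ∏ i, y i ^ Function.update b j (b j + 1) i = y j * ∏ i, y i ^ b i := by
  rw [prod_pow_update, ← mul_prod_erase univ _ (mem_univ j), pow_succ', mul_assoc]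

lemma prod_pow_update_pred_mul (y : ι → K) (b : ι → ℕ) {j : ι} (hj : 1 ≤ b j) :
    (∏ i, y i ^ Function.update b j (b j - 1) i) * y j = ∏ i, y i ^ b i := by
  rw [prod_pow_update, ← mul_prod_erase univ _ (mem_univ j), mul_right_comm,
    pow_sub_one_mul (by omega : b j ≠ 0)]

lemma sum_update_pred_add_one (b : ι → ℕ) {j : ι} (hj : 1 ≤ b j) :
    ∑ i, Function.update b j (b j - 1) i + 1 = ∑ i, b i := by
  rw [sum_update_of_mem (mem_univ j), ← add_sum_erase univ _ (mem_univ j),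
    sdiff_singleton_eq_erase]
  omega

-- Also true at `z = 0`, where both sides are `0` since `0⁻¹ = 0` and `a ≥ 1`.
lemma inv_pow_mul_eq_mul_inv_pow_succ_mul (z p : K) {a : ℕ} (ha : 1 ≤ a) :
    (z ^ a * p)⁻¹ = z * (z ^ (a + 1) * p)⁻¹ := by
  rcases eq_or_ne z 0 with rfl | hz
  · simp [zero_pow (by omega : a ≠ 0)]
  · rw [pow_succ, mul_right_comm, mul_inv (_ * _) z, mul_comm _ z⁻¹, mul_inv_cancel_left₀ hz]

lemma inv_pow_mul_prod_eq_sum (z : K) (α y : ι → K) (hz : z = ∑ j, α j * y j)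
    (hy : ∀ i, y i ≠ 0) {a : ℕ} (ha : 1 ≤ a) (b : ι → ℕ) (hb : ∀ i, 1 ≤ b i) :
    (z ^ a * ∏ i, y i ^ b i)⁻¹ =
      ∑ j, α j * (z ^ (a + 1) * ∏ i, y i ^ Function.update b j (b j - 1) i)⁻¹ := by
  rw [inv_pow_mul_eq_mul_inv_pow_succ_mul z _ ha, hz, sum_mul]
  refine sum_congr rfl fun j _ => ?_
  rw [← prod_pow_update_pred_mul y b (hb j), ← mul_assoc, mul_inv (_ * _) (y j), mul_assoc (α j),
    mul_comm (y j), mul_assoc, inv_mul_cancel₀ (hy j), mul_one]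

end Field

section Span

variable {ι X K : Type*} [Fintype ι] [DecidableEq ι] [Field K]
  (y α : ι → X → K) (y₀ : X → K)

def reducedFractions (N : ℕ) : Set (X → K) :=
  {F | ∃ (k : ι) (m : ι → ℕ) (t₀ : ℕ) (t : ι → ℕ), t₀ + ∑ i ∈ univ.erase k, t i = N ∧
    F = fun x => (∏ i, α i x ^ m i) / (y₀ x ^ t₀ * ∏ i ∈ univ.erase k, y i x ^ t i)}

lemma mul_mem_span_reducedFractions (j : ι) {N : ℕ} {F : X → K}
    (hF : F ∈ Submodule.span K (reducedFractions y α y₀ N)) :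
    α j * F ∈ Submodule.span K (reducedFractions y α y₀ N) := by
  suffices h : Submodule.span K (reducedFractions y α y₀ N) ≤
      (Submodule.span K (reducedFractions y α y₀ N)).comap (LinearMap.mulLeft K (α j)) from h hF
  rw [Submodule.span_le]
  rintro _ ⟨k, m, t₀, t, hdeg, rfl⟩
  refine Submodule.subset_span ⟨k, Function.update m j (m j + 1), t₀, t, hdeg, ?_⟩
  funext x
  simp only [LinearMap.mulLeft_apply, Pi.mul_apply, prod_pow_update_succ, mul_div_assoc]

theorem inv_pow_mul_prod_mem_span (hy : ∀ i x, y i x ≠ 0)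
    (hy₀ : ∀ x, y₀ x = ∑ i, α i x * y i x) {a : ℕ} (ha : 1 ≤ a) (b : ι → ℕ) :
    (fun x => (y₀ x ^ a * ∏ i, y i x ^ b i)⁻¹) ∈
      Submodule.span K (reducedFractions y α y₀ (a + ∑ i, b i)) := by
  induction hn : ∑ i, b i using Nat.strong_induction_on generalizing a b with
  | _ n ih =>
    by_cases hb : ∀ i, 1 ≤ b i
    · have hreduce : (fun x => (y₀ x ^ a * ∏ i, y i x ^ b i)⁻¹) = ∑ j, α j *
          fun x => (y₀ x ^ (a + 1) * ∏ i, y i x ^ Function.update b j (b j - 1) i)⁻¹ := by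
        funext x
        simp only [Finset.sum_apply, Pi.mul_apply]
        exact inv_pow_mul_prod_eq_sum _ (α · x) (y · x) (hy₀ x) (hy · x) ha b hb
      rw [hreduce]
      refine Submodule.sum_mem _ fun j _ => mul_mem_span_reducedFractions y α y₀ j ?_
      have hsum := sum_update_pred_add_one b (hb j)
      convert ih _ (by omega) (by omega : 1 ≤ a + 1) (Function.update b j (b j - 1)) rfl using 3
      omega
    · obtain ⟨k, hk⟩ : ∃ k, b k = 0 := by simpa [Nat.one_le_iff_ne_zero] using hb
      refine hn ▸ Submodule.subset_span ⟨k, 0, a, b, by rw [sum_erase univ hk], ?_⟩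
      funext x
      rw [prod_erase univ (by rw [hk, pow_zero])]
      simp only [Pi.zero_apply, pow_zero, prod_const_one, one_div]

end Span

theorem partial_fraction_reduction_functions_general
    {s : ℕ} (y : Fin s → (Fin s → ℝ) → ℝ) (α : Fin s → (Fin s → ℝ) → ℝ)
    (hy : ∀ i x, y i x ≠ 0)
    (y₀ : (Fin s → ℝ) → ℝ) (hy₀def : ∀ x, y₀ x = ∑ i, α i x * y i x)
    (h : Fin s → ℕ) :
    ∃ (M : ℕ) (c : Fin M → ℝ) (k : Fin M → Fin s) (m : Fin M → Fin s → ℕ)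
      (t₀ : Fin M → ℕ) (t : Fin M → Fin s → ℕ),
      (∀ j, t₀ j + ∑ i ∈ Finset.univ.erase (k j), t j i = 1 + ∑ i, h i) ∧
      ∀ x : Fin s → ℝ,
        (y₀ x * ∏ i, y i x ^ h i)⁻¹ =
          ∑ j, c j * (∏ i, α i x ^ m j i) /
            (y₀ x ^ t₀ j * ∏ i ∈ Finset.univ.erase (k j), y i x ^ t j i) := by
  obtain ⟨M, c, F, hF⟩ :=
    Submodule.mem_span_set'.mp (inv_pow_mul_prod_mem_span y α y₀ hy hy₀def le_rfl h)
  choose k m t₀ t hdeg hFkmt using fun j => (F j).2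
  refine ⟨M, c, k, m, t₀, t, hdeg, fun x => ?_⟩
  have := congrFun hF x
  simp only [pow_one, Finset.sum_apply, Pi.smul_apply, smul_eq_mul, hFkmt] at this
  simp only [← this, mul_div_assoc]

/-- Lemma 1: Let `y₁,…,y_s, α₁,…,α_s : ℝ^s → ℝ` be nowhere-zero functions and set
`y₀ = ∑ αᵢ yᵢ`, assumed nowhere zero. For positive integers `h₁,…,h_s`, the function
`1/(y₀ ∏ yᵢ^{hᵢ})` is a finite linear combination of terms
`(∏ αᵢ^{mᵢ}) / ∏_{i ∈ {0,…,s}∖{k}} yᵢ^{tᵢ}` with `k ∈ {1,…,s}` and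
`∑_{i ∈ {0,…,s}∖{k}} tᵢ = 1 + ∑ hᵢ`. -/
theorem partial_fraction_reduction_functions
    {s : ℕ} (y : Fin s → (Fin s → ℝ) → ℝ) (α : Fin s → (Fin s → ℝ) → ℝ)
    (hy : ∀ i x, y i x ≠ 0) (hα : ∀ i x, α i x ≠ 0)
    (y₀ : (Fin s → ℝ) → ℝ) (hy₀def : ∀ x, y₀ x = ∑ i, α i x * y i x)
    (hy₀ : ∀ x, y₀ x ≠ 0)
    (h : Fin s → ℕ) (hh : ∀ i, 1 ≤ h i) :
    ∃ (M : ℕ) (c : Fin M → ℝ) (k : Fin M → Fin s) (m : Fin M → Fin s → ℕ)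
      (t₀ : Fin M → ℕ) (t : Fin M → Fin s → ℕ),
      (∀ j, t₀ j + ∑ i ∈ Finset.univ.erase (k j), t j i = 1 + ∑ i, h i) ∧
      ∀ x : Fin s → ℝ,
        (y₀ x * ∏ i, y i x ^ h i)⁻¹ =
          ∑ j, c j * (∏ i, α i x ^ m j i) /
            (y₀ x ^ t₀ j * ∏ i ∈ Finset.univ.erase (k j), y i x ^ t j i) :=
  partial_fraction_reduction_functions_general y α hy y₀ hy₀def h
end

section
/- Let X = {(1,0), (0,1), (−1,2)} ⊂ Z². For (x,y) ∈ Z², let t_X(x,y) = #{(β_1,β_2,β_3) ∈ N³ : β_1(1,0) + β_2(0,1) + β_3(−1,2) = (x,y)}. Then t_X(x,y) = ((2x+y+2)/2)·t_{A_1}(x,y) + ((2x+y+1)/2)·t_{A_1}(x,y−1) − x·t_{A_2}(x,y), where A_1 = {(1,0),(−1,2)}, A_2 = {(1,0),(0,1)}, and t_{A_i} are the corresponding (0/1-valued) partition functions of the independent sets A_i. -/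
/-!
Fixing `β₃ = k` forces `β₁ = x + k` and `β₂ = y - 2k`, so `t_X(x, y)` counts the integers `k`
with `max 0 (-x) ≤ k ≤ ⌊y / 2⌋`. The two-vector systems have at most one solution each, so
`t_{A₁}(x, y)`, `t_{A₁}(x, y - 1)` and `t_{A₂}(x, y)` are indicators of explicit linear and parity
conditions, and the identity becomes a case analysis on the parity of `y` and the signs involved.
-/

lemma Nat.card_subtype_eq_ite {α : Type*} {p : α → Prop} {c : Prop} [Decidable c]
    (hp : ∀ a b, p a → p b → a = b) (hc : (∃ a, p a) ↔ c) :
    Nat.card {a // p a} = if c then 1 else 0 := by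
  have : Subsingleton {a // p a} := ⟨fun a b => Subtype.ext (hp a b a.2 b.2)⟩
  split_ifs with h
  · obtain ⟨a, ha⟩ := hc.2 h
    exact Nat.card_of_subsingleton ⟨a, ha⟩
  · have : IsEmpty {a // p a} := ⟨fun a => h (hc.1 ⟨a, a.2⟩)⟩
    exact Nat.card_of_isEmpty

lemma card_partitions_X (x y : ℤ) :
    Nat.card {β : ℕ × ℕ × ℕ // (β.1 : ℤ) - β.2.2 = x ∧ (β.2.1 : ℤ) + 2 * β.2.2 = y} =
      (y / 2 + 1 - max 0 (-x)).toNat := by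
  let e : {β : ℕ × ℕ × ℕ // (β.1 : ℤ) - β.2.2 = x ∧ (β.2.1 : ℤ) + 2 * β.2.2 = y} ≃
      Finset.Icc (max 0 (-x)) (y / 2) :=
    { toFun := fun β => ⟨β.1.2.2, by have := β.2; rw [Finset.mem_Icc]; omega⟩
      invFun := fun k => ⟨((x + k).toNat, (y - 2 * k).toNat, k.1.toNat), by
        have := Finset.mem_Icc.1 k.2; dsimp only; omega⟩
      left_inv := fun β => by have := β.2; ext <;> simp <;> omega
      right_inv := fun k => by have := Finset.mem_Icc.1 k.2; ext; dsimp only; omega }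
  rw [Nat.card_congr e, Nat.card_eq_finsetCard, Int.card_Icc]

lemma card_partitions_A₁ (x y : ℤ) :
    Nat.card {β : ℕ × ℕ // (β.1 : ℤ) - β.2 = x ∧ 2 * (β.2 : ℤ) = y} =
      if 2 ∣ y ∧ 0 ≤ y ∧ 0 ≤ x + y / 2 then 1 else 0 := by
  refine Nat.card_subtype_eq_ite (fun a b ha hb => by ext <;> omega) ⟨?_, fun h => ?_⟩
  · rintro ⟨β, hβ⟩
    omega
  · exact ⟨((x + y / 2).toNat, (y / 2).toNat), by omega⟩

lemma card_partitions_A₂ (x y : ℤ) :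
    Nat.card {β : ℕ × ℕ // (β.1 : ℤ) = x ∧ (β.2 : ℤ) = y} =
      if 0 ≤ x ∧ 0 ≤ y then 1 else 0 := by
  refine Nat.card_subtype_eq_ite (fun a b ha hb => by ext <;> omega) ⟨?_, fun h => ?_⟩
  · rintro ⟨β, hβ⟩
    omega
  · exact ⟨(x.toNat, y.toNat), by omega⟩

lemma two_mul_toNat_eq_indicator_combination (x y : ℤ) :
    2 * ((y / 2 + 1 - max 0 (-x)).toNat : ℤ) =
      (2 * x + y + 2) * (if 2 ∣ y ∧ 0 ≤ y ∧ 0 ≤ x + y / 2 then 1 else 0) +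
      (2 * x + y + 1) * (if 2 ∣ y - 1 ∧ 0 ≤ y - 1 ∧ 0 ≤ x + (y - 1) / 2 then 1 else 0) -
      2 * x * (if 0 ≤ x ∧ 0 ≤ y then 1 else 0) := by
  split_ifs <;> omega

/-- Example 2: for `X = {(1,0),(0,1),(−1,2)} ⊂ ℤ²`,
`t_X(x,y) = ((2x+y+2)/2)·t_{A₁}(x,y) + ((2x+y+1)/2)·t_{A₁}(x,y−1) − x·t_{A₂}(x,y)`,
where `A₁ = {(1,0),(−1,2)}` and `A₂ = {(1,0),(0,1)}`. -/
theorem discrete_truncated_power_example2 (x y : ℤ) :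
    (Nat.card {β : ℕ × ℕ × ℕ //
        (β.1 : ℤ) - β.2.2 = x ∧ (β.2.1 : ℤ) + 2 * β.2.2 = y} : ℚ) =
      (2 * (x : ℚ) + y + 2) / 2 *
        (Nat.card {β : ℕ × ℕ // (β.1 : ℤ) - β.2 = x ∧ 2 * (β.2 : ℤ) = y} : ℚ) +
      (2 * (x : ℚ) + y + 1) / 2 *
        (Nat.card {β : ℕ × ℕ // (β.1 : ℤ) - β.2 = x ∧ 2 * (β.2 : ℤ) = y - 1} : ℚ) -
      (x : ℚ) *
        (Nat.card {β : ℕ × ℕ // (β.1 : ℤ) = x ∧ (β.2 : ℤ) = y} : ℚ) := by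
  rw [card_partitions_X, card_partitions_A₁, card_partitions_A₁, card_partitions_A₂]
  have key := congrArg (Int.cast : ℤ → ℚ) (two_mul_toNat_eq_indicator_combination x y)
  push_cast [apply_ite (Int.cast : ℤ → ℚ), apply_ite (Nat.cast : ℕ → ℚ)] at key ⊢
  linarith
end

section
/- Let X ⊂ Z^s ∖ {0} be a finite multiset spanning R^s, such that 0 is not a nontrivial nonnegative real combination of elements of X. Then the function Π_{a∈X} 1/(1−e^{−⟨a,x⟩}) (defined on the open set where all ⟨a,x⟩ > 0) can be written as a finite linear combination with real coefficients of functions of the form e^{⟨c,x⟩} · Π_{a∈A} 1/(1−e^{−⟨a,x⟩})^{h_a}, where A is a linearly independent set of s vectors, each a ∈ A a positive integer multiple of an element of X, h_a ∈ N with Σ_{a∈A} h_a = #X, and c is an integer linear combination of elements of X. -/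
/-!
Write `D_v(x) = 1 - e^{-⟨v,x⟩}`. Start from `∏_k D_{X_k}^{-1}` and keep a list of vectors `w_k`,
each a positive multiple of `X_k`, with exponents `h_k` summing to `#X`. If the vectors `w_k` with
`h_k ≠ 0` are independent, they extend by further `w_k` (with exponent `0`) to a basis, since the
`w_k` span: the product is then a term of the required form. Otherwise take an integer relation
`∑_{l ∈ T} e_l w_l = n w_q` with `n > 0` and every `l ∈ T` smaller than `q`. Telescoping
`1 - ∏_l z_l = ∑_l (∏_{j<l} z_j)(1 - z_l)` for `z_l = e^{-⟨e_l w_l, x⟩}`, together with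
`1 - z^t = (1 - z) Q(z)` for exponential sums `Q`, writes `D_{n w_q}` as `∑_l g_l D_{w_l}` and as
`D_{w_q} G`. Hence the product is a sum, with exponential-sum coefficients, of products in which
`w_q` is replaced by `n w_q` and one unit of exponent moved from some `l < q` to `q`. This
strictly decreases `∑_k h_k (N - k)`, where `N = #X` indexes `X`, so the process stops.
-/

open Finset

lemma tsub_single_add_single_add_single {ι : Type*} [DecidableEq ι] {h : ι → ℕ} {l : ι}
    (hl : 1 ≤ h l) (q : ι) :
    h - Pi.single l 1 + Pi.single q 1 + Pi.single l 1 = h + Pi.single q 1 := by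
  funext k
  by_cases hk : k = l
  · subst hk
    simp only [Pi.add_apply, Pi.sub_apply, Pi.single_eq_same, Pi.single_apply]
    omega
  · simp [Pi.single_apply, hk]

section Algebra

variable {ι : Type*} [Fintype ι] [DecidableEq ι]

lemma prod_pow_add_single {M : Type*} [CommMonoid M] (c : ι → M) (h : ι → ℕ) (l : ι) :
    ∏ k, c k ^ (h + Pi.single l 1 : ι → ℕ) k = (∏ k, c k ^ h k) * c l := by
  simp only [Pi.add_apply, pow_add, prod_mul_distrib, Pi.single_apply, pow_ite, pow_one, pow_zero,
    prod_ite_eq', mem_univ, if_true]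

lemma sum_mul_add_single (φ : ι → ℕ) (h : ι → ℕ) (l : ι) :
    ∑ k, (h + Pi.single l 1 : ι → ℕ) k * φ k = ∑ k, h k * φ k + φ l := by
  simp [add_mul, sum_add_distrib, Pi.single_apply]

lemma sum_tsub_single_add_single {h : ι → ℕ} {l : ι} (hl : 1 ≤ h l) (q : ι) (φ : ι → ℕ) :
    ∑ k, (h - Pi.single l 1 + Pi.single q 1 : ι → ℕ) k * φ k + φ l = ∑ k, h k * φ k + φ q := by
  rw [← sum_mul_add_single, tsub_single_add_single_add_single hl, sum_mul_add_single]

lemma prod_inv_pow_eq_sum_mul_prod_update {K : Type*} [Field K]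
    {a : ι → K} {b G : K} {g : ι → K} {T : Finset ι} {q : ι} {h : ι → ℕ} {h' : ι → ι → ℕ}
    (ha : ∀ l ∈ T, a l ≠ 0) (hb : b ≠ 0) (hbq : b = a q * G) (hbT : b = ∑ l ∈ T, g l * a l)
    (hqT : q ∉ T) (hh' : ∀ l ∈ T, h' l + Pi.single l 1 = h + Pi.single q 1) :
    ∏ k, (a k)⁻¹ ^ h k =
      ∑ l ∈ T, g l * G ^ h q * ∏ k, (Function.update a q b k)⁻¹ ^ h' l k := by
  set c : ι → K := fun k => (Function.update a q b k)⁻¹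
  have hcq : c q = b⁻¹ := by simp [c]
  have hc : ∀ k, k ≠ q → c k = (a k)⁻¹ := fun k hk => by simp [c, hk]
  have hq : G ^ h q * ∏ k, c k ^ h k = ∏ k, (a k)⁻¹ ^ h k := by
    have haq : a q ≠ 0 := left_ne_zero_of_mul (hbq ▸ hb)
    have hG : G ≠ 0 := right_ne_zero_of_mul (hbq ▸ hb)
    rw [← mul_prod_erase _ _ (mem_univ q), ← mul_prod_erase _ _ (mem_univ q),
      prod_congr rfl fun k hk => by rw [hc k (ne_of_mem_erase hk)], hcq, hbq, ← mul_assoc,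
      ← mul_pow]
    field_simp
  have hmove : ∀ l ∈ T, ∏ k, c k ^ h' l k = a l * b⁻¹ * ∏ k, c k ^ h k := by
    intro l hl
    have key := prod_pow_add_single c (h' l) l
    rw [hh' l hl, prod_pow_add_single, hcq, hc l (ne_of_mem_of_not_mem hl hqT)] at key
    calc ∏ k, c k ^ h' l k = (∏ k, c k ^ h' l k) * (a l)⁻¹ * a l :=
          (inv_mul_cancel_right₀ (ha l hl) _).symm
      _ = a l * b⁻¹ * ∏ k, c k ^ h k := by rw [← key]; ring
  calc ∏ k, (a k)⁻¹ ^ h k = b * b⁻¹ * (G ^ h q * ∏ k, c k ^ h k) := by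
        rw [mul_inv_cancel₀ hb, one_mul, hq]
    _ = ∑ l ∈ T, g l * G ^ h q * ∏ k, c k ^ h' l k := by
        nth_rw 1 [hbT]
        rw [sum_mul, sum_mul]
        refine sum_congr rfl fun l hl => ?_
        rw [hmove l hl]
        ring

end Algebra

@[to_additive]
lemma prod_comp_equiv_of_eq_one {ι κ M : Type*} [Fintype ι] [Fintype κ] [CommMonoid M]
    {b : Set ι} (e : κ ≃ b) {f : ι → M} (hf : ∀ k ∉ b, f k = 1) : ∏ i, f (e i) = ∏ k, f k := by
  classical
  rw [e.prod_comp (fun k : b => f k), Finset.prod_set_coe]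
  exact Fintype.prod_subset fun k hk => Set.mem_toFinset.2 (by_contra fun hkb => hk (hf k hkb))

lemma exists_pos_relation_of_not_linearIndepOn {ι M : Type*} [LinearOrder ι] [AddCommGroup M]
    {v : ι → M} {S : Finset ι} (hS : ¬LinearIndepOn ℤ v (S : Set ι)) :
    ∃ (T : Finset ι) (q : ι) (e : ι → ℤ) (n : ℕ), 0 < n ∧ T ⊆ S ∧ (∀ l ∈ T, l < q) ∧
      ∑ l ∈ T, e l • v l = (n : ℤ) • v q := by
  obtain ⟨f, hf, i, hiS, hi⟩ := not_linearIndepOn_finset_iff.1 hS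
  set U := S.filter (f · ≠ 0) with hUdef
  have hU : U.Nonempty := ⟨i, mem_filter.2 ⟨hiS, hi⟩⟩
  set q := U.max' hU
  have hqU : q ∈ U := U.max'_mem hU
  have hfq : f q ≠ 0 := (mem_filter.1 hqU).2
  have hrel : ∑ l ∈ U.erase q, f l • v l = -(f q • v q) := by
    rw [eq_neg_iff_add_eq_zero, add_comm, add_sum_erase U (fun l => f l • v l) hqU,
      hUdef, sum_filter_of_ne (p := (f · ≠ 0)) fun l _ hl h0 => hl (by rw [h0, zero_smul]), hf]
  refine ⟨U.erase q, q, fun l => -(f q).sign * f l, (f q).natAbs, Int.natAbs_pos.2 hfq,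
    (erase_subset _ _).trans (filter_subset _ _),
    fun l hl => lt_of_le_of_ne (U.le_max' l (mem_of_mem_erase hl)) (ne_of_mem_erase hl), ?_⟩
  simp_rw [mul_smul]
  rw [← smul_sum, hrel, smul_neg, neg_smul, neg_neg, smul_smul, Int.sign_mul_self_eq_abs,
    Int.natCast_natAbs]

namespace ToricReduction

variable {s N : ℕ}

def pairing (x : Fin s → ℝ) : (Fin s → ℤ) →+ ℝ where
  toFun a := ∑ j, (a j : ℝ) * x j
  map_zero' := by simp
  map_add' a b := by simp [add_mul, sum_add_distrib]

def IsPosMultiple (v u : Fin s → ℤ) : Prop := ∃ n : ℕ, 0 < n ∧ v = (n : ℤ) • u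

lemma IsPosMultiple.smul {v u : Fin s → ℤ} (hv : IsPosMultiple v u) {n : ℕ} (hn : 0 < n) :
    IsPosMultiple ((n : ℤ) • v) u := by
  obtain ⟨m, hm, rfl⟩ := hv
  exact ⟨n * m, Nat.mul_pos hn hm, by rw [smul_smul]; push_cast; rfl⟩

lemma linearIndepOn_intCast_iff {ι : Type*} {v : ι → Fin s → ℤ} {S : Set ι} :
    LinearIndepOn ℝ (fun k j => (v k j : ℝ)) S ↔ LinearIndepOn ℤ v S := by
  simpa [LinearIndepOn, Function.comp_def] using
    linearIndependent_algebraMap_comp_iff (R := ℤ) (S := ℝ) (v := fun x : S => v x)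

variable (X : Fin N → Fin s → ℤ)

lemma IsPosMultiple.mem_span {v : Fin s → ℤ} {k : Fin N} (hv : IsPosMultiple v (X k)) :
    v ∈ Submodule.span ℤ (Set.range X) := by
  obtain ⟨n, -, rfl⟩ := hv
  exact Submodule.smul_mem _ _ (Submodule.subset_span ⟨k, rfl⟩)

abbrev Region : Type := {x : Fin s → ℝ // ∀ k, 0 < pairing x (X k)}

noncomputable def expFun (c : Fin s → ℤ) : Region X → ℝ := fun x => Real.exp (pairing x.1 c)

noncomputable def denomFun (v : Fin s → ℤ) : Region X → ℝ := 1 - expFun X (-v)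

noncomputable def invDenomProd {ι : Type*} [Fintype ι] (w : ι → Fin s → ℤ) (h : ι → ℕ) :
    Region X → ℝ :=
  ∏ k, (denomFun X (w k))⁻¹ ^ h k

def toricTerms : Set (Region X → ℝ) :=
  {F | ∃ (A : Fin s → Fin s → ℤ) (h : Fin s → ℕ) (c : Fin s → ℤ),
    LinearIndependent ℝ (fun i j => (A i j : ℝ)) ∧ (∀ i, ∃ k, IsPosMultiple (A i) (X k)) ∧
    ∑ i, h i = N ∧ c ∈ Submodule.span ℤ (Set.range X) ∧ F = expFun X c * invDenomProd X A h}

noncomputable def expAlgebra : Subalgebra ℝ (Region X → ℝ) :=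
  Algebra.adjoin ℝ (expFun X '' Submodule.span ℤ (Set.range X))

lemma expFun_apply (c : Fin s → ℤ) (x : Region X) :
    expFun X c x = Real.exp (∑ j, (c j : ℝ) * x.1 j) := rfl

lemma expFun_add (a b : Fin s → ℤ) : expFun X (a + b) = expFun X a * expFun X b := by
  funext x
  simp [expFun, Real.exp_add]

lemma expFun_zero : expFun X 0 = 1 := by
  funext x
  simp [expFun]

lemma expFun_nsmul (n : ℕ) (a : Fin s → ℤ) : expFun X (n • a) = expFun X a ^ n := by
  funext x
  simp only [expFun, Pi.pow_apply]
  rw [map_nsmul, nsmul_eq_mul, Real.exp_nat_mul]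

lemma expFun_sum {ι : Type*} (T : Finset ι) (v : ι → Fin s → ℤ) :
    expFun X (∑ l ∈ T, v l) = ∏ l ∈ T, expFun X (v l) := by
  funext x
  simp [expFun, Real.exp_sum]

lemma expFun_mem_expAlgebra {c : Fin s → ℤ} (hc : c ∈ Submodule.span ℤ (Set.range X)) :
    expFun X c ∈ expAlgebra X :=
  Algebra.subset_adjoin ⟨c, hc, rfl⟩

lemma denomFun_neg (v : Fin s → ℤ) : denomFun X (-v) = -expFun X v * denomFun X v := by
  have h1 := expFun_add X v (-v)
  rw [add_neg_cancel, expFun_zero] at h1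
  rw [denomFun, denomFun, neg_neg]
  linear_combination h1

lemma denomFun_nsmul (n : ℕ) (v : Fin s → ℤ) :
    denomFun X (n • v) = denomFun X v * ∑ i ∈ range n, expFun X (-v) ^ i := by
  rw [denomFun, denomFun, ← smul_neg, expFun_nsmul, mul_neg_geom_sum]

lemma exists_denomFun_zsmul_eq_mul {v : Fin s → ℤ} (hv : v ∈ Submodule.span ℤ (Set.range X))
    (t : ℤ) : ∃ Q ∈ expAlgebra X, denomFun X (t • v) = denomFun X v * Q := by
  have hgeom (n : ℕ) : ∑ i ∈ range n, expFun X (-v) ^ i ∈ expAlgebra X :=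
    sum_mem fun i _ => pow_mem (expFun_mem_expAlgebra X (neg_mem hv)) i
  obtain ⟨n, rfl | rfl⟩ := Int.eq_nat_or_neg t
  · exact ⟨_, hgeom n, by rw [natCast_zsmul, denomFun_nsmul]⟩
  · refine ⟨-expFun X (n • v) * ∑ i ∈ range n, expFun X (-v) ^ i,
      mul_mem (neg_mem (expFun_mem_expAlgebra X (nsmul_mem hv n))) (hgeom n), ?_⟩
    rw [neg_smul, natCast_zsmul, denomFun_neg, denomFun_nsmul]
    ring

lemma denomFun_sum {ι : Type*} [LinearOrder ι] (T : Finset ι) (v : ι → Fin s → ℤ) :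
    denomFun X (∑ l ∈ T, v l) =
      ∑ l ∈ T, (∏ j ∈ T with j < l, expFun X (-v j)) * denomFun X (v l) := by
  have htel := prod_one_sub_ordered T fun l => denomFun X (v l)
  simp only [denomFun, sub_sub_cancel] at htel
  rw [denomFun, ← sum_neg_distrib, expFun_sum, htel, sub_sub_cancel]
  exact sum_congr rfl fun l _ => mul_comm _ _

lemma denomFun_pos {v : Fin s → ℤ} {k : Fin N} (hv : IsPosMultiple v (X k)) (x : Region X) :
    0 < denomFun X v x := by
  obtain ⟨n, hn, rfl⟩ := hv
  have : 0 < pairing x.1 ((n : ℤ) • X k) := by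
    rw [map_zsmul, zsmul_eq_mul]
    exact mul_pos (by exact_mod_cast hn) (x.2 k)
  simpa [denomFun, expFun] using this

lemma invDenomProd_apply {ι : Type*} [Fintype ι] (w : ι → Fin s → ℤ) (h : ι → ℕ) (x : Region X) :
    invDenomProd X w h x = ∏ k, ((1 - Real.exp (-∑ j, (w k j : ℝ) * x.1 j)) ^ h k)⁻¹ := by
  simp [invDenomProd, denomFun, expFun_apply, inv_pow]

noncomputable def toricSpan : Submodule ℝ (Region X → ℝ) := Submodule.span ℝ (toricTerms X)

lemma expFun_mul_mem_toricTerms {c : Fin s → ℤ} (hc : c ∈ Submodule.span ℤ (Set.range X))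
    {F : Region X → ℝ} (hF : F ∈ toricTerms X) : expFun X c * F ∈ toricTerms X := by
  obtain ⟨A, h, c', hA, hpos, hsum, hc', rfl⟩ := hF
  exact ⟨A, h, c + c', hA, hpos, hsum, add_mem hc hc', by rw [expFun_add, mul_assoc]⟩

lemma mul_mem_toricSpan {g F : Region X → ℝ} (hg : g ∈ expAlgebra X) (hF : F ∈ toricSpan X) :
    g * F ∈ toricSpan X := by
  induction hg using Algebra.adjoin_induction generalizing F with
  | mem g hg =>
    obtain ⟨c, hc, rfl⟩ := hg
    induction hF using Submodule.span_induction with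
    | mem F hF => exact Submodule.subset_span (expFun_mul_mem_toricTerms X hc hF)
    | zero => rw [mul_zero]; exact zero_mem _
    | add F₁ F₂ _ _ h₁ h₂ => rw [mul_add]; exact add_mem h₁ h₂
    | smul r F _ hF => rw [mul_smul_comm]; exact Submodule.smul_mem _ r hF
  | algebraMap r =>
    rw [Algebra.algebraMap_eq_smul_one, smul_mul_assoc, one_mul]
    exact Submodule.smul_mem _ r hF
  | add g₁ g₂ _ _ h₁ h₂ => rw [add_mul]; exact add_mem (h₁ hF) (h₂ hF)
  | mul g₁ g₂ _ _ h₁ h₂ => rw [mul_assoc]; exact h₁ (h₂ hF)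

lemma exists_invDenomProd_eq_sum {ι : Type*} [Fintype ι] [LinearOrder ι]
    {w : ι → Fin s → ℤ} {κ : ι → Fin N} (hw : ∀ k, IsPosMultiple (w k) (X (κ k)))
    {T : Finset ι} {q : ι} (hqT : q ∉ T) {e : ι → ℤ} {n : ℕ} (hn : 0 < n)
    (hrel : ∑ l ∈ T, e l • w l = (n : ℤ) • w q)
    (h : ι → ℕ) {h' : ι → ι → ℕ} (hh' : ∀ l ∈ T, h' l + Pi.single l 1 = h + Pi.single q 1) :
    ∃ g : ι → Region X → ℝ, (∀ l, g l ∈ expAlgebra X) ∧ invDenomProd X w h =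
      ∑ l ∈ T, g l * invDenomProd X (Function.update w q ((n : ℤ) • w q)) (h' l) := by
  have hL : ∀ k, w k ∈ Submodule.span ℤ (Set.range X) := fun k => (hw k).mem_span X
  choose Q hQ hQeq using fun k t => exists_denomFun_zsmul_eq_mul X (hL k) t
  set P : ι → Region X → ℝ := fun l => ∏ j ∈ T with j < l, expFun X (-(e j • w j))
  refine ⟨fun l => P l * Q l (e l) * Q q n ^ h q, fun l => ?_, ?_⟩
  · refine mul_mem (mul_mem (prod_mem fun j _ => ?_) (hQ l _)) (pow_mem (hQ q n) _)
    exact expFun_mem_expAlgebra X (neg_mem (zsmul_mem (hL j) _))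
  have htel : denomFun X ((n : ℤ) • w q) = ∑ l ∈ T, P l * Q l (e l) * denomFun X (w l) := by
    rw [← hrel, denomFun_sum]
    exact sum_congr rfl fun l _ => by rw [hQeq]; ring
  funext x
  have hupd : ∀ k, denomFun X (Function.update w q ((n : ℤ) • w q) k) x =
      Function.update (fun k => denomFun X (w k) x) q (denomFun X ((n : ℤ) • w q) x) k :=
    fun k => Function.apply_update (fun _ v => denomFun X v x) w q _ k
  simp only [invDenomProd, Finset.prod_apply, Finset.sum_apply, Pi.mul_apply, Pi.pow_apply,
    Pi.inv_apply, hupd]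
  refine prod_inv_pow_eq_sum_mul_prod_update (fun l _ => (denomFun_pos X (hw l) x).ne')
    (denomFun_pos X ((hw q).smul hn) x).ne' (by rw [hQeq]; rfl) ?_ hqT hh'
  rw [htel, Finset.sum_apply]
  rfl

lemma invDenomProd_mem_toricTerms
    (hspan : Submodule.span ℝ (Set.range fun k => (fun j => (X k j : ℝ))) = ⊤)
    {w : Fin N → Fin s → ℤ} (hw : ∀ k, IsPosMultiple (w k) (X k)) {h : Fin N → ℕ}
    (hsum : ∑ k, h k = N) (hli : LinearIndepOn ℝ (fun k j => (w k j : ℝ)) {k | h k ≠ 0}) :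
    invDenomProd X w h ∈ toricTerms X := by
  set wR : Fin N → Fin s → ℝ := fun k j => (w k j : ℝ)
  obtain ⟨b, -, hhb, hspanb, hlib⟩ := exists_linearIndepOn_extension hli (Set.subset_univ _)
  have hwspan : Submodule.span ℝ (Set.range wR) = ⊤ := by
    rw [eq_top_iff, ← hspan, Submodule.span_le]
    rintro _ ⟨k, rfl⟩
    obtain ⟨n, hn, hwk⟩ := hw k
    have : (fun j => (X k j : ℝ)) = (n : ℝ)⁻¹ • wR k := by
      funext j
      simp [wR, hwk, hn.ne']
    change (fun j => (X k j : ℝ)) ∈ _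
    rw [this]
    exact Submodule.smul_mem _ _ (Submodule.subset_span ⟨k, rfl⟩)
  have hbspan : ⊤ ≤ Submodule.span ℝ (Set.range fun i : b => wR i) := by
    rw [← Set.image_eq_range, ← hwspan, Submodule.span_le, ← Set.image_univ]
    exact hspanb
  have hcard : Nat.card b = s := by
    simpa using (Module.finrank_eq_nat_card_basis (Module.Basis.mk hlib hbspan)).symm
  let e : Fin s ≃ b := (Finite.equivFinOfCardEq hcard).symm
  have hsupp : ∀ k ∉ b, h k = 0 := fun k hk => by_contra fun h0 => hk (hhb h0)
  refine ⟨fun i => w (e i), fun i => h (e i), 0, hlib.comp e e.injective,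
    fun i => ⟨e i, hw _⟩, ?_, zero_mem _, ?_⟩
  · rw [sum_comp_equiv_of_eq_zero e hsupp, hsum]
  · rw [expFun_zero, one_mul, invDenomProd, invDenomProd]
    exact (prod_comp_equiv_of_eq_one e fun k hk => by rw [hsupp k hk, pow_zero]).symm

theorem invDenomProd_mem_toricSpan
    (hspan : Submodule.span ℝ (Set.range fun k => (fun j => (X k j : ℝ))) = ⊤)
    (w : Fin N → Fin s → ℤ) (hw : ∀ k, IsPosMultiple (w k) (X k)) (h : Fin N → ℕ)
    (hsum : ∑ k, h k = N) : invDenomProd X w h ∈ toricSpan X := by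
  by_cases hli : LinearIndepOn ℝ (fun k j => (w k j : ℝ)) {k | h k ≠ 0}
  · exact Submodule.subset_span (invDenomProd_mem_toricTerms X hspan hw hsum hli)
  rw [← coe_filter_univ, linearIndepOn_intCast_iff] at hli
  obtain ⟨T, q, e, n, hn, hTS, hTq, hrel⟩ := exists_pos_relation_of_not_linearIndepOn hli
  have hT : ∀ l ∈ T, 1 ≤ h l := fun l hl => Nat.one_le_iff_ne_zero.2 (mem_filter.1 (hTS hl)).2
  obtain ⟨g, hg, hF⟩ := exists_invDenomProd_eq_sum X hw (fun hq => lt_irrefl q (hTq q hq)) hn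
    hrel h (h' := fun l => h - Pi.single l 1 + Pi.single q 1)
    fun l hl => tsub_single_add_single_add_single (hT l hl) q
  rw [hF]
  refine sum_mem fun l hl => mul_mem_toricSpan X (hg l) ?_
  have hw' : ∀ k, IsPosMultiple (Function.update w q ((n : ℤ) • w q) k) (X k) := by
    intro k
    rcases eq_or_ne k q with rfl | hk
    · simpa using (hw k).smul hn
    · simpa [hk] using hw k
  have hsum' := sum_tsub_single_add_single (hT l hl) q 1
  simp only [Pi.one_apply, mul_one, hsum] at hsum'
  exact invDenomProd_mem_toricSpan hspan _ hw' _ (by omega)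
termination_by ∑ k, h k * (N - k)
decreasing_by
  have hmove := sum_tsub_single_add_single (hT l hl) q fun k => N - k
  have hlq := hTq l hl
  have := q.isLt
  omega

end ToricReduction

theorem toric_reduction_real_general
    {s N : ℕ} (X : Fin N → (Fin s → ℤ))
    (hspan : Submodule.span ℝ (Set.range fun k => (fun j => (X k j : ℝ))) = ⊤) :
    ∃ (M : ℕ) (r : Fin M → ℝ) (A : Fin M → Fin s → (Fin s → ℤ))
      (h : Fin M → Fin s → ℕ) (c : Fin M → (Fin s → ℤ)),
      (∀ m, LinearIndependent ℝ (fun i => (fun j => (A m i j : ℝ)))) ∧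
      (∀ m i, ∃ (n : ℕ) (k : Fin N), 0 < n ∧ A m i = (n : ℤ) • X k) ∧
      (∀ m, ∑ i, h m i = N) ∧
      (∀ m, ∃ d : Fin N → ℤ, c m = ∑ k, d k • X k) ∧
      ∀ x : Fin s → ℝ, (∀ k, 0 < ∑ j, (X k j : ℝ) * x j) →
        ∏ k, (1 - Real.exp (-∑ j, (X k j : ℝ) * x j))⁻¹ =
          ∑ m, r m * Real.exp (∑ j, (c m j : ℝ) * x j) *
            ∏ i, ((1 - Real.exp (-∑ j, (A m i j : ℝ) * x j)) ^ h m i)⁻¹ := by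
  obtain ⟨M, r, F, hF⟩ := Submodule.mem_span_set'.1 <|
    ToricReduction.invDenomProd_mem_toricSpan X hspan X
    (fun k => ⟨1, one_pos, (one_smul ℤ (X k)).symm⟩) 1 (by simp)
  choose A h c hA hpos hsum hc hFeq using fun m => (F m).2
  refine ⟨M, r, A, h, c, hA, fun m i => ?_, hsum, fun m => ?_, fun x hx => ?_⟩
  · obtain ⟨k, n, hn, hAk⟩ := hpos m i
    exact ⟨n, k, hn, hAk⟩
  · obtain ⟨d, hd⟩ := (Submodule.mem_span_range_iff_exists_fun ℤ).1 (hc m)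
    exact ⟨d, hd.symm⟩
  · simpa [Finset.sum_apply, hFeq, ToricReduction.expFun_apply,
      ToricReduction.invDenomProd_apply, mul_assoc] using
      (congrFun hF ⟨x, hx⟩).symm

/-- Theorem 4, toric reduction over ℝ: let `X ⊂ ℤ^s ∖ {0}` be a finite multiset
spanning `ℝ^s`, with `0` not a nontrivial nonnegative combination of its elements. Then
`∏_{a∈X} 1/(1−e^{−⟨a,x⟩})` is, on the region where all `⟨a,x⟩ > 0`, a finite real linear
combination of functions `e^{⟨c,x⟩} ∏_{a∈A} 1/(1−e^{−⟨a,x⟩})^{h_a}`, where each `A` is a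
linearly independent set of `s` vectors which are positive integer multiples of elements of
`X`, `∑_{a∈A} h_a = #X`, and `c` is an integer combination of elements of `X`. -/
theorem toric_reduction_real
    {s N : ℕ} (X : Fin N → (Fin s → ℤ))
    (hne : ∀ k, X k ≠ 0)
    (hspan : Submodule.span ℝ (Set.range fun k => (fun j => (X k j : ℝ))) = ⊤)
    (hpos : ∀ c : Fin N → ℝ, (∀ k, 0 ≤ c k) →
      (∀ j, ∑ k, c k * (X k j : ℝ) = 0) → ∀ k, c k = 0) :
    ∃ (M : ℕ) (r : Fin M → ℝ) (A : Fin M → Fin s → (Fin s → ℤ))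
      (h : Fin M → Fin s → ℕ) (c : Fin M → (Fin s → ℤ)),
      (∀ m, LinearIndependent ℝ (fun i => (fun j => (A m i j : ℝ)))) ∧
      (∀ m i, ∃ (n : ℕ) (k : Fin N), 0 < n ∧ A m i = (n : ℤ) • X k) ∧
      (∀ m, ∑ i, h m i = N) ∧
      (∀ m, ∃ d : Fin N → ℤ, c m = ∑ k, d k • X k) ∧
      ∀ x : Fin s → ℝ, (∀ k, 0 < ∑ j, (X k j : ℝ) * x j) →
        ∏ k, (1 - Real.exp (-∑ j, (X k j : ℝ) * x j))⁻¹ =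
          ∑ m, r m * Real.exp (∑ j, (c m j : ℝ) * x j) *
            ∏ i, ((1 - Real.exp (-∑ j, (A m i j : ℝ) * x j)) ^ h m i)⁻¹ :=
  toric_reduction_real_general X hspan
end
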